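/- Let f : ℝⁿ → ℝ be twice continuously differentiable, m > 0, γ ≥ 0, h > 0, and let Ψ be the classical-momentum (heavy-ball) step Ψ(x, p) = (X, P) with P = e^{−γh} p − h ∇f(x) and X = x + (h/m) P. Then the Jacobian determinant of Ψ at every point (x, p) equals det DΨ(x, p) = e^{−n γ h}; i.e., the heavy-ball map contracts phase-space volume by exactly the factor e^{−nγh} of the underlying conformal Hamiltonian flow over a time step h. -/

import Mathlib

/-! The heavy-ball step is the symplectic-Euler splitting `Ψ = D ∘ K` of a momentum kick
`K (x, p) = (x, e^{-γh} p - h ∇f(x))` and a position drift `D (x, P) = (x + (h/m) P, P)`.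
The drift is a linear shear, of determinant `1`, and the Jacobian of the kick is block lower
triangular with diagonal blocks `I` and `e^{-γh} I`, of determinant `e^{-nγh}`. -/

/-- The heavy-ball (classical momentum) step in phase space:
`P = e^{−γh} p − h ∇f(x)`, `X = x + (h/m) P`. -/
noncomputable def heavyBallStep {n : ℕ} (f : EuclideanSpace ℝ (Fin n) → ℝ) (m γ h : ℝ)
    (z : EuclideanSpace ℝ (Fin n) × EuclideanSpace ℝ (Fin n)) :
    EuclideanSpace ℝ (Fin n) × EuclideanSpace ℝ (Fin n) :=
  let P := Real.exp (-γ * h) • z.2 - h • gradient f z.1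
  (z.1 + (h / m) • P, P)

namespace LinearMap

variable {R M N : Type*} [CommRing R] [AddCommGroup M] [Module R M] [AddCommGroup N] [Module R N]

def blockMap (A : M →ₗ[R] M) (B : N →ₗ[R] M) (C : M →ₗ[R] N) (D : N →ₗ[R] N) :
    M × N →ₗ[R] M × N :=
  (A ∘ₗ fst R M N + B ∘ₗ snd R M N).prod (C ∘ₗ fst R M N + D ∘ₗ snd R M N)

theorem toMatrix_blockMap {ι κ : Type*} [Fintype ι] [Fintype κ] [DecidableEq ι] [DecidableEq κ]
    (bM : Module.Basis ι R M) (bN : Module.Basis κ R N)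
    (A : M →ₗ[R] M) (B : N →ₗ[R] M) (C : M →ₗ[R] N) (D : N →ₗ[R] N) :
    toMatrix (bM.prod bN) (bM.prod bN) (blockMap A B C D) =
      Matrix.fromBlocks (toMatrix bM bM A) (toMatrix bN bM B) (toMatrix bM bN C)
        (toMatrix bN bN D) := by
  ext (i | i) (j | j) <;> simp [blockMap, toMatrix_apply, Module.Basis.prod_apply]

variable [Module.Free R M] [Module.Finite R M] [Module.Free R N] [Module.Finite R N]

theorem det_blockMap_zero₂₁ (A : M →ₗ[R] M) (B : N →ₗ[R] M) (D : N →ₗ[R] N) :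
    (blockMap A B 0 D).det = A.det * D.det := by
  let bM := Module.Free.chooseBasis R M
  let bN := Module.Free.chooseBasis R N
  rw [← det_toMatrix (bM.prod bN), toMatrix_blockMap, map_zero, Matrix.det_fromBlocks_zero₂₁,
    det_toMatrix, det_toMatrix]

theorem det_blockMap_zero₁₂ (A : M →ₗ[R] M) (C : M →ₗ[R] N) (D : N →ₗ[R] N) :
    (blockMap A 0 C D).det = A.det * D.det := by
  let bM := Module.Free.chooseBasis R M
  let bN := Module.Free.chooseBasis R N
  rw [← det_toMatrix (bM.prod bN), toMatrix_blockMap, map_zero, Matrix.det_fromBlocks_zero₁₂,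
    det_toMatrix, det_toMatrix]

end LinearMap

theorem ContDiff.differentiable_gradient {F : Type*} [NormedAddCommGroup F]
    [InnerProductSpace ℝ F] [CompleteSpace F] {f : F → ℝ} (hf : ContDiff ℝ 2 f) :
    Differentiable ℝ (gradient f) :=
  (InnerProductSpace.toDual ℝ F).symm.toContinuousLinearEquiv.differentiable.comp
    ((hf.fderiv_right (by norm_num)).differentiable one_ne_zero)

section SymplecticEuler

open ContinuousLinearMap

variable {𝕜 E : Type*} [NontriviallyNormedField 𝕜] [NormedAddCommGroup E] [NormedSpace 𝕜 E]

def momentumKick (g : E → E) (c h : 𝕜) (z : E × E) : E × E := (z.1, c • z.2 - h • g z.1)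

def positionDrift (s : 𝕜) : E × E →L[𝕜] E × E := (fst 𝕜 E E + s • snd 𝕜 E E).prod (snd 𝕜 E E)

theorem hasFDerivAt_momentumKick {g : E → E} {B : E →L[𝕜] E} {x p : E} (hg : HasFDerivAt g B x)
    (c h : 𝕜) :
    HasFDerivAt (momentumKick g c h)
      ((fst 𝕜 E E).prod (c • snd 𝕜 E E - h • B.comp (fst 𝕜 E E))) (x, p) :=
  hasFDerivAt_fst.prodMk ((hasFDerivAt_snd.const_smul c).sub
    ((hg.comp (x, p) hasFDerivAt_fst).const_smul h))

theorem differentiableAt_momentumKick {g : E → E} {x : E} (hg : DifferentiableAt 𝕜 g x)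
    (c h : 𝕜) (p : E) : DifferentiableAt 𝕜 (momentumKick g c h) (x, p) :=
  (hasFDerivAt_momentumKick hg.hasFDerivAt c h).differentiableAt

variable [FiniteDimensional 𝕜 E]

theorem det_positionDrift (s : 𝕜) : (positionDrift (E := E) s).toLinearMap.det = 1 := by
  have : (positionDrift (E := E) s).toLinearMap =
      LinearMap.blockMap LinearMap.id (s • LinearMap.id) 0 LinearMap.id := by
    refine LinearMap.ext fun z => ?_
    simp [positionDrift, LinearMap.blockMap]
  rw [this, LinearMap.det_blockMap_zero₂₁, LinearMap.det_id, one_mul]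

theorem det_fderiv_momentumKick {g : E → E} {x : E} (hg : DifferentiableAt 𝕜 g x) (c h : 𝕜)
    (p : E) :
    (fderiv 𝕜 (momentumKick g c h) (x, p)).toLinearMap.det = c ^ Module.finrank 𝕜 E := by
  have : (fderiv 𝕜 (momentumKick g c h) (x, p)).toLinearMap =
      LinearMap.blockMap LinearMap.id 0 (-h • (fderiv 𝕜 g x : E →ₗ[𝕜] E)) (c • LinearMap.id) := by
    rw [(hasFDerivAt_momentumKick hg.hasFDerivAt c h (p := p)).fderiv]
    refine LinearMap.ext fun z => ?_
    simp [LinearMap.blockMap, neg_add_eq_sub]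
  rw [this, LinearMap.det_blockMap_zero₁₂, LinearMap.det_id, LinearMap.det_smul, LinearMap.det_id,
    one_mul, mul_one]

end SymplecticEuler

theorem heavyBallStep_eq_positionDrift_comp_momentumKick {n : ℕ}
    (f : EuclideanSpace ℝ (Fin n) → ℝ) (m γ h : ℝ) :
    heavyBallStep f m γ h =
      positionDrift (h / m) ∘ momentumKick (gradient f) (Real.exp (-γ * h)) h := by
  ext z <;> simp [heavyBallStep, positionDrift, momentumKick]

theorem heavyBall_jacobian_det_general
    {n : ℕ} (f : EuclideanSpace ℝ (Fin n) → ℝ) (hf : ContDiff ℝ 2 f)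
    (m γ h : ℝ)
    (x p : EuclideanSpace ℝ (Fin n)) :
    LinearMap.det ((fderiv ℝ (heavyBallStep f m γ h) (x, p)).toLinearMap)
      = Real.exp (-(n : ℝ) * γ * h) := by
  have hgrad := hf.differentiable_gradient x
  rw [heavyBallStep_eq_positionDrift_comp_momentumKick,
    fderiv_comp _ (positionDrift _).differentiableAt (differentiableAt_momentumKick hgrad _ _ _),
    ContinuousLinearMap.fderiv (positionDrift (E := EuclideanSpace ℝ (Fin n)) (h / m)),
    ContinuousLinearMap.toLinearMap_comp, LinearMap.det_comp,
    det_positionDrift, det_fderiv_momentumKick hgrad, finrank_euclideanSpace_fin, one_mul,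
    ← Real.exp_nat_mul]
  ring_nf

/-- the Jacobian determinant of the heavy-ball step is exactly
`e^{−nγh}`: the heavy-ball map contracts phase-space volume by exactly the
factor of the underlying conformal Hamiltonian flow over a time step `h`. -/
theorem heavyBall_jacobian_det
    {n : ℕ} (f : EuclideanSpace ℝ (Fin n) → ℝ) (hf : ContDiff ℝ 2 f)
    (m γ h : ℝ) (hm : 0 < m) (hγ : 0 ≤ γ) (hh : 0 < h)
    (x p : EuclideanSpace ℝ (Fin n)) :
    LinearMap.det ((fderiv ℝ (heavyBallStep f m γ h) (x, p)).toLinearMap)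
      = Real.exp (-(n : ℝ) * γ * h) :=
  heavyBall_jacobian_det_general f hf m γ h x p
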